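/- arXiv:2108.01110 — 2 statements merged into one kernel-verified Lean document; each statement's English description precedes it below -/
import Mathlib

section
/- Let S be an m×m symmetric positive definite real matrix and H an m×n real matrix with H^T S H nonzero. Then the generalized condition number of H^T S H (ratio of largest eigenvalue to smallest nonzero eigenvalue) satisfies κ(H^T S H) ≤ κ(H)^2 · κ(S), where κ(H) is the ratio of the largest singular value of H to its smallest nonzero singular value and κ(S) = λ_max(S)/λ_min(S). -/
open Matrix

/-- The set of eigenvalues of a real square matrix. -/
noncomputable def eigs {m : ℕ} (A : Matrix (Fin m) (Fin m) ℝ) : Set ℝ :=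
  {μ | ∃ v : Fin m → ℝ, v ≠ 0 ∧ A.mulVec v = μ • v}

noncomputable def lamMax {m : ℕ} (A : Matrix (Fin m) (Fin m) ℝ) : ℝ := sSup (eigs A)

noncomputable def lamMin {m : ℕ} (A : Matrix (Fin m) (Fin m) ℝ) : ℝ := sInf (eigs A)

/-- smallest nonzero eigenvalue -/
noncomputable def lamMinNZ {m : ℕ} (A : Matrix (Fin m) (Fin m) ℝ) : ℝ := sInf (eigs A \ {0})

/-- generalized condition number λ_max / λ*_min of a symmetric PSD matrix -/
noncomputable def condStar {m : ℕ} (A : Matrix (Fin m) (Fin m) ℝ) : ℝ := lamMax A / lamMinNZ A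

/-- generalized condition number σ_max / σ*_min of a rectangular matrix -/
noncomputable def condRect {m n : ℕ} (H : Matrix (Fin m) (Fin n) ℝ) : ℝ :=
  Real.sqrt (lamMax (Hᵀ * H) / lamMinNZ (Hᵀ * H))

/-!
Rayleigh quotients. If `v` is an eigenvector of `Hᵀ S H` with eigenvalue `μ`, then
`μ ‖v‖² = (Hv)ᵀ S (Hv)` lies between `λ_min(S) ‖Hv‖²` and `λ_max(S) ‖Hv‖²`, while
`‖Hv‖² = vᵀ (Hᵀ H) v ≤ λ_max(Hᵀ H) ‖v‖²`. For `μ ≠ 0`, `v` is orthogonal to `ker H = ker (Hᵀ H)`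
(as `μ ⟪u, v⟫ = ⟪Hu, S H v⟫`), so also `‖Hv‖² ≥ λ*_min(Hᵀ H) ‖v‖²`. Taking `μ` extremal gives
`λ_max(Hᵀ S H) ≤ λ_max(S) λ_max(Hᵀ H)` and `λ*_min(Hᵀ S H) ≥ λ_min(S) λ*_min(Hᵀ H)`.
-/

lemma eigs_eq_spectrum {k : ℕ} (A : Matrix (Fin k) (Fin k) ℝ) : eigs A = spectrum ℝ A := by
  ext μ
  rw [← spectrum_toLin', ← Module.End.hasEigenvalue_iff_mem_spectrum,
    Module.End.hasEigenvalue_iff, Submodule.ne_bot_iff]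
  simp only [Module.End.mem_eigenspace_iff, toLin'_apply]
  exact exists_congr fun _ => and_comm

lemma dotProduct_mulVec_eq_of_mulVec_eq_smul {k : ℕ} {A : Matrix (Fin k) (Fin k) ℝ} {μ : ℝ}
    {v : Fin k → ℝ} (h : A *ᵥ v = μ • v) : v ⬝ᵥ (A *ᵥ v) = μ * (v ⬝ᵥ v) := by
  rw [h, dotProduct_smul, smul_eq_mul]

namespace Matrix.IsHermitian

variable {k : ℕ} {A : Matrix (Fin k) (Fin k) ℝ}

lemma eigs_eq_range (hA : A.IsHermitian) : eigs A = Set.range hA.eigenvalues := by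
  rw [eigs_eq_spectrum, hA.spectrum_real_eq_range_eigenvalues]

lemma eigs_finite (hA : A.IsHermitian) : (eigs A).Finite :=
  hA.eigs_eq_range ▸ Set.finite_range _

lemma eigenvalues_mem_eigs (hA : A.IsHermitian) (i : Fin k) : hA.eigenvalues i ∈ eigs A :=
  hA.eigs_eq_range ▸ Set.mem_range_self i

lemma lamMax_mem_eigs (hA : A.IsHermitian) (hk : k ≠ 0) : lamMax A ∈ eigs A :=
  Set.Nonempty.csSup_mem ⟨_, hA.eigenvalues_mem_eigs ⟨0, Nat.pos_of_ne_zero hk⟩⟩ hA.eigs_finite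

lemma lamMin_mem_eigs (hA : A.IsHermitian) (hk : k ≠ 0) : lamMin A ∈ eigs A :=
  Set.Nonempty.csInf_mem ⟨_, hA.eigenvalues_mem_eigs ⟨0, Nat.pos_of_ne_zero hk⟩⟩ hA.eigs_finite

lemma lamMinNZ_mem_eigs_diff (hA : A.IsHermitian) (hA0 : A ≠ 0) : lamMinNZ A ∈ eigs A \ {0} := by
  obtain ⟨v, μ, hμ, hv, hAv⟩ := hA.exists_eigenvector_of_ne_zero hA0
  exact Set.Nonempty.csInf_mem ⟨μ, ⟨v, hv, hAv⟩, hμ⟩ hA.eigs_finite.sdiff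

lemma dotProduct_mulVec_eq_sum (hA : A.IsHermitian) (v : Fin k → ℝ) :
    v ⬝ᵥ (A *ᵥ v) = ∑ i, hA.eigenvalues i * (⇑(hA.eigenvectorBasis i) ⬝ᵥ v) ^ 2 := by
  have parseval :=
    hA.eigenvectorBasis.sum_inner_mul_inner (WithLp.toLp 2 v) (WithLp.toLp 2 (A *ᵥ v))
  simp only [EuclideanSpace.inner_eq_star_dotProduct, star_trivial] at parseval
  rw [dotProduct_comm, ← parseval]
  refine Finset.sum_congr rfl fun i _ => ?_
  rw [dotProduct_comm (A *ᵥ v), dotProduct_mulVec, ← mulVec_transpose,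
    ← conjTranspose_eq_transpose_of_trivial, hA.eq, mulVec_eigenvectorBasis, smul_dotProduct,
    smul_eq_mul]
  ring

lemma dotProduct_self_eq_sum (hA : A.IsHermitian) (v : Fin k → ℝ) :
    v ⬝ᵥ v = ∑ i, (⇑(hA.eigenvectorBasis i) ⬝ᵥ v) ^ 2 := by
  have parseval := hA.eigenvectorBasis.sum_inner_mul_inner (WithLp.toLp 2 v) (WithLp.toLp 2 v)
  simp only [EuclideanSpace.inner_eq_star_dotProduct, star_trivial] at parseval
  rw [← parseval]
  exact Finset.sum_congr rfl fun i _ => by rw [dotProduct_comm v, sq]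

lemma dotProduct_mulVec_le_of_eigenvalues_le (hA : A.IsHermitian) {c : ℝ} {v : Fin k → ℝ}
    (h : ∀ i, ⇑(hA.eigenvectorBasis i) ⬝ᵥ v ≠ 0 → hA.eigenvalues i ≤ c) :
    v ⬝ᵥ (A *ᵥ v) ≤ c * (v ⬝ᵥ v) := by
  rw [hA.dotProduct_mulVec_eq_sum, hA.dotProduct_self_eq_sum, Finset.mul_sum]
  refine Finset.sum_le_sum fun i _ => ?_
  by_cases hi : ⇑(hA.eigenvectorBasis i) ⬝ᵥ v = 0
  · simp [hi]
  · exact mul_le_mul_of_nonneg_right (h i hi) (sq_nonneg _)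

lemma le_dotProduct_mulVec_of_le_eigenvalues (hA : A.IsHermitian) {c : ℝ} {v : Fin k → ℝ}
    (h : ∀ i, ⇑(hA.eigenvectorBasis i) ⬝ᵥ v ≠ 0 → c ≤ hA.eigenvalues i) :
    c * (v ⬝ᵥ v) ≤ v ⬝ᵥ (A *ᵥ v) := by
  rw [hA.dotProduct_mulVec_eq_sum, hA.dotProduct_self_eq_sum, Finset.mul_sum]
  refine Finset.sum_le_sum fun i _ => ?_
  by_cases hi : ⇑(hA.eigenvectorBasis i) ⬝ᵥ v = 0
  · simp [hi]
  · exact mul_le_mul_of_nonneg_right (h i hi) (sq_nonneg _)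

lemma dotProduct_mulVec_le_lamMax (hA : A.IsHermitian) (v : Fin k → ℝ) :
    v ⬝ᵥ (A *ᵥ v) ≤ lamMax A * (v ⬝ᵥ v) :=
  hA.dotProduct_mulVec_le_of_eigenvalues_le fun i _ =>
    le_csSup hA.eigs_finite.bddAbove (hA.eigenvalues_mem_eigs i)

lemma lamMin_mul_le_dotProduct_mulVec (hA : A.IsHermitian) (v : Fin k → ℝ) :
    lamMin A * (v ⬝ᵥ v) ≤ v ⬝ᵥ (A *ᵥ v) :=
  hA.le_dotProduct_mulVec_of_le_eigenvalues fun i _ =>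
    csInf_le hA.eigs_finite.bddBelow (hA.eigenvalues_mem_eigs i)

lemma lamMinNZ_mul_le_dotProduct_mulVec (hA : A.IsHermitian) {v : Fin k → ℝ}
    (hv : ∀ u, A *ᵥ u = 0 → u ⬝ᵥ v = 0) :
    lamMinNZ A * (v ⬝ᵥ v) ≤ v ⬝ᵥ (A *ᵥ v) := by
  refine hA.le_dotProduct_mulVec_of_le_eigenvalues fun i hi => ?_
  have hne : hA.eigenvalues i ≠ 0 := fun h0 =>
    hi (hv _ (by rw [mulVec_eigenvectorBasis, h0, zero_smul]))
  exact csInf_le hA.eigs_finite.sdiff.bddBelow ⟨hA.eigenvalues_mem_eigs i, hne⟩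

end Matrix.IsHermitian

namespace Matrix.PosSemidef

variable {k : ℕ} {A : Matrix (Fin k) (Fin k) ℝ}

lemma nonneg_of_mem_eigs (hA : A.PosSemidef) {μ : ℝ} (hμ : μ ∈ eigs A) : 0 ≤ μ := by
  rw [hA.isHermitian.eigs_eq_range] at hμ
  obtain ⟨i, rfl⟩ := hμ
  exact hA.eigenvalues_nonneg i

lemma lamMax_nonneg (hA : A.PosSemidef) : 0 ≤ lamMax A :=
  Real.sSup_nonneg fun _ => hA.nonneg_of_mem_eigs

lemma lamMin_nonneg (hA : A.PosSemidef) : 0 ≤ lamMin A :=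
  Real.sInf_nonneg fun _ => hA.nonneg_of_mem_eigs

lemma lamMinNZ_pos (hA : A.PosSemidef) (hA0 : A ≠ 0) : 0 < lamMinNZ A := by
  obtain ⟨hmem, hne⟩ := hA.isHermitian.lamMinNZ_mem_eigs_diff hA0
  exact (hA.nonneg_of_mem_eigs hmem).lt_of_ne' hne

end Matrix.PosSemidef

lemma Matrix.PosDef.lamMin_pos {k : ℕ} {A : Matrix (Fin k) (Fin k) ℝ} (hA : A.PosDef)
    (hk : k ≠ 0) : 0 < lamMin A := by
  obtain ⟨i, hi⟩ := hA.isHermitian.eigs_eq_range ▸ hA.isHermitian.lamMin_mem_eigs hk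
  exact hi ▸ hA.eigenvalues_pos i

lemma dotProduct_self_pos_of_ne_zero {ι : Type*} [Fintype ι] {v : ι → ℝ} (hv : v ≠ 0) :
    0 < v ⬝ᵥ v := by
  simpa using dotProduct_star_self_pos_iff.mpr hv

section Congruence

variable {m n : ℕ} {S : Matrix (Fin m) (Fin m) ℝ} (H : Matrix (Fin m) (Fin n) ℝ)

lemma dotProduct_mulVec_transpose_mul_mul (u v : Fin n → ℝ) :
    u ⬝ᵥ ((Hᵀ * S * H) *ᵥ v) = (H *ᵥ u) ⬝ᵥ (S *ᵥ (H *ᵥ v)) := by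
  rw [← mulVec_mulVec, ← mulVec_mulVec, dotProduct_mulVec, vecMul_transpose]

lemma dotProduct_mulVec_transpose_mul_self (u v : Fin n → ℝ) :
    u ⬝ᵥ ((Hᵀ * H) *ᵥ v) = (H *ᵥ u) ⬝ᵥ (H *ᵥ v) := by
  simpa using dotProduct_mulVec_transpose_mul_mul (S := 1) H u v

lemma Matrix.PosSemidef.transpose_mul_mul_same (hS : S.PosSemidef) : (Hᵀ * S * H).PosSemidef := by
  simpa only [conjTranspose_eq_transpose_of_trivial] using hS.conjTranspose_mul_mul_same H

lemma Matrix.posSemidef_transpose_mul_self : (Hᵀ * H).PosSemidef := by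
  simpa only [conjTranspose_eq_transpose_of_trivial] using posSemidef_conjTranspose_mul_self H

lemma lamMax_transpose_mul_mul_le (hS : S.PosSemidef) (hn : n ≠ 0) :
    lamMax (Hᵀ * S * H) ≤ lamMax S * lamMax (Hᵀ * H) := by
  obtain ⟨v, hv, hMv⟩ := (hS.transpose_mul_mul_same H).isHermitian.lamMax_mem_eigs hn
  have hG := (posSemidef_transpose_mul_self H).isHermitian
  refine le_of_mul_le_mul_right ?_ (dotProduct_self_pos_of_ne_zero hv)
  calc lamMax (Hᵀ * S * H) * (v ⬝ᵥ v) = (H *ᵥ v) ⬝ᵥ (S *ᵥ (H *ᵥ v)) := by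
        rw [← dotProduct_mulVec_eq_of_mulVec_eq_smul hMv, dotProduct_mulVec_transpose_mul_mul]
    _ ≤ lamMax S * ((H *ᵥ v) ⬝ᵥ (H *ᵥ v)) := hS.isHermitian.dotProduct_mulVec_le_lamMax _
    _ = lamMax S * (v ⬝ᵥ ((Hᵀ * H) *ᵥ v)) := by rw [dotProduct_mulVec_transpose_mul_self]
    _ ≤ lamMax S * (lamMax (Hᵀ * H) * (v ⬝ᵥ v)) :=
        mul_le_mul_of_nonneg_left (hG.dotProduct_mulVec_le_lamMax v) hS.lamMax_nonneg
    _ = lamMax S * lamMax (Hᵀ * H) * (v ⬝ᵥ v) := (mul_assoc _ _ _).symm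

lemma lamMin_mul_lamMinNZ_le (hS : S.PosSemidef) (hM : Hᵀ * S * H ≠ 0) :
    lamMin S * lamMinNZ (Hᵀ * H) ≤ lamMinNZ (Hᵀ * S * H) := by
  obtain ⟨⟨v, hv, hMv⟩, hμ⟩ := (hS.transpose_mul_mul_same H).isHermitian.lamMinNZ_mem_eigs_diff hM
  have hG := (posSemidef_transpose_mul_self H).isHermitian
  have hker : ∀ u, (Hᵀ * H) *ᵥ u = 0 → u ⬝ᵥ v = 0 := by
    intro u hu
    rw [← conjTranspose_eq_transpose_of_trivial, conjTranspose_mul_self_mulVec_eq_zero] at hu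
    have : lamMinNZ (Hᵀ * S * H) * (u ⬝ᵥ v) = 0 := by
      rw [← smul_eq_mul, ← dotProduct_smul, ← hMv, dotProduct_mulVec_transpose_mul_mul, hu,
        zero_dotProduct]
    exact (mul_eq_zero.mp this).resolve_left hμ
  refine le_of_mul_le_mul_right ?_ (dotProduct_self_pos_of_ne_zero hv)
  calc lamMin S * lamMinNZ (Hᵀ * H) * (v ⬝ᵥ v) = lamMin S * (lamMinNZ (Hᵀ * H) * (v ⬝ᵥ v)) :=
        mul_assoc _ _ _
    _ ≤ lamMin S * (v ⬝ᵥ ((Hᵀ * H) *ᵥ v)) :=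
        mul_le_mul_of_nonneg_left (hG.lamMinNZ_mul_le_dotProduct_mulVec hker) hS.lamMin_nonneg
    _ = lamMin S * ((H *ᵥ v) ⬝ᵥ (H *ᵥ v)) := by rw [dotProduct_mulVec_transpose_mul_self]
    _ ≤ (H *ᵥ v) ⬝ᵥ (S *ᵥ (H *ᵥ v)) := hS.isHermitian.lamMin_mul_le_dotProduct_mulVec _
    _ = lamMinNZ (Hᵀ * S * H) * (v ⬝ᵥ v) := by
        rw [← dotProduct_mulVec_eq_of_mulVec_eq_smul hMv, dotProduct_mulVec_transpose_mul_mul]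

end Congruence

theorem stmt0 {m n : ℕ} (S : Matrix (Fin m) (Fin m) ℝ) (H : Matrix (Fin m) (Fin n) ℝ)
    (hS : S.PosDef) (hne : Hᵀ * S * H ≠ 0) :
    condStar (Hᵀ * S * H) ≤ condRect H ^ 2 * (lamMax S / lamMin S) := by
  have hH : H ≠ 0 := by rintro rfl; simp at hne
  have hm : m ≠ 0 := by rintro rfl; exact hH (Subsingleton.elim _ _)
  have hn : n ≠ 0 := by rintro rfl; exact hH (Subsingleton.elim _ _)
  have hG := posSemidef_transpose_mul_self H
  have hG0 : Hᵀ * H ≠ 0 := by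
    rwa [← conjTranspose_eq_transpose_of_trivial, Ne, conjTranspose_mul_self_eq_zero]
  have hcondRect : condRect H ^ 2 = lamMax (Hᵀ * H) / lamMinNZ (Hᵀ * H) :=
    Real.sq_sqrt (div_nonneg hG.lamMax_nonneg (hG.lamMinNZ_pos hG0).le)
  rw [condStar, hcondRect, div_mul_div_comm, mul_comm (lamMax (Hᵀ * H)), mul_comm (lamMinNZ _)]
  exact div_le_div₀ (mul_nonneg hS.posSemidef.lamMax_nonneg hG.lamMax_nonneg)
    (lamMax_transpose_mul_mul_le H hS.posSemidef hn)
    (mul_pos (hS.lamMin_pos hm) (hG.lamMinNZ_pos hG0))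
    (lamMin_mul_lamMinNZ_le H hS.posSemidef hne)
end

section
/- Let Ĥ = [e, H] ∈ ℝ^{N×(n+1)} with e the all-ones vector, μ = (1/N)H^T e, and U = [[1, -μ^T],[0, I_n]]. If Ĥ has full column rank, then the smallest eigenvalue satisfies λ_min(U^T Ĥ^T Ĥ U) ≥ λ_min(Ĥ^T Ĥ). -/
/-!
Write `x = (c, v)` and `w = U (0, v) = (-μ ⬝ v, v)`. Then `Ĥ U x = c e + Ĥ w`, and
`Ĥ w = H v - (μ ⬝ v) e` has zero sum precisely because `μ` is the column mean of `H`; hence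
`‖Ĥ U x‖² = N c² + ‖Ĥ w‖²`. With `λ = λ_min(ĤᵀĤ) ≥ 0`, the Rayleigh bound gives
`‖Ĥ w‖² ≥ λ ‖w‖² ≥ λ ‖v‖²` and `N = ‖Ĥ (1, 0)‖² ≥ λ`, so `‖Ĥ U x‖² ≥ λ ‖x‖²` for every
`x`.
-/

open Matrix

/-- Ĥ = [e, H] : prepend a column of ones to H -/
noncomputable def hatM {N n : ℕ} (H : Matrix (Fin N) (Fin n) ℝ) :
    Matrix (Fin N) (Fin (n + 1)) ℝ :=
  Matrix.of fun i j => Fin.cases (motive := fun _ => ℝ) 1 (fun j' => H i j') j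

/-- U = [[1, -μᵀ],[0, I]] : the centering transformation -/
noncomputable def centerU {n : ℕ} (μ : Fin n → ℝ) : Matrix (Fin (n + 1)) (Fin (n + 1)) ℝ :=
  Matrix.of fun i j =>
    Fin.cases (motive := fun _ => ℝ)
      (Fin.cases (motive := fun _ => ℝ) 1 (fun j' => -μ j') j)
      (fun i' => Fin.cases (motive := fun _ => ℝ) 0 (fun j' => if i' = j' then 1 else 0) j) i


namespace Matrix

variable {n : Type*}

theorem isHermitian_transpose_mul_self {p : Type*} [Fintype p] (B : Matrix p n ℝ) :
    (Bᵀ * B).IsHermitian := by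
  simpa using isHermitian_conjTranspose_mul_self B

variable [Fintype n]

theorem dotProduct_mulVec_transpose_mul_self {p : Type*} [Fintype p] (B : Matrix p n ℝ)
    (x : n → ℝ) : x ⬝ᵥ (Bᵀ * B) *ᵥ x = B *ᵥ x ⬝ᵥ B *ᵥ x := by
  rw [← mulVec_mulVec, dotProduct_mulVec, vecMul_transpose]

variable [DecidableEq n]

theorem IsHermitian.sub_smul_one_eq_conj_diagonal {A : Matrix n n ℝ} (hA : A.IsHermitian)
    (c : ℝ) :
    A - c • 1 = (hA.eigenvectorUnitary : Matrix n n ℝ) * diagonal (hA.eigenvalues - c • 1) *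
      (hA.eigenvectorUnitary : Matrix n n ℝ)ᴴ := by
  have hU : (hA.eigenvectorUnitary : Matrix n n ℝ) *
      star (hA.eigenvectorUnitary : Matrix n n ℝ) = 1 :=
    Unitary.coe_mul_star_self _
  have hD : diagonal (hA.eigenvalues - c • 1) = diagonal hA.eigenvalues - c • 1 := by
    ext i j
    rcases eq_or_ne i j with rfl | h <;> simp [*]
  conv_lhs => rw [hA.spectral_theorem]
  rw [hD, mul_sub, sub_mul, mul_smul_comm, smul_mul_assoc, mul_one, ← star_eq_conjTranspose, hU,
    Unitary.conjStarAlgAut_apply, RCLike.ofReal_real_eq_id, Function.id_comp]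

theorem IsHermitian.mul_dotProduct_self_le_of_le_eigenvalues {A : Matrix n n ℝ}
    (hA : A.IsHermitian) {c : ℝ} (hc : ∀ i, c ≤ hA.eigenvalues i) (x : n → ℝ) :
    c * (x ⬝ᵥ x) ≤ x ⬝ᵥ A *ᵥ x := by
  have hpsd : (A - c • 1).PosSemidef := by
    rw [hA.sub_smul_one_eq_conj_diagonal]
    refine PosSemidef.mul_mul_conjTranspose_same (PosSemidef.diagonal fun i => ?_) _
    simpa using hc i
  simpa only [star_trivial, sub_mulVec, smul_mulVec, one_mulVec, dotProduct_sub, dotProduct_smul,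
    smul_eq_mul, sub_nonneg] using hpsd.dotProduct_mulVec_nonneg x

end Matrix

theorem eigs_eq_range_eigenvalues {m : ℕ} {A : Matrix (Fin m) (Fin m) ℝ} (hA : A.IsHermitian) :
    eigs A = Set.range hA.eigenvalues := by
  rw [← hA.spectrum_real_eq_range_eigenvalues, ← spectrum_toLin']
  ext b
  rw [← Module.End.hasEigenvalue_iff_mem_spectrum, Module.End.hasEigenvalue_iff,
    Submodule.ne_bot_iff]
  simp only [eigs, Set.mem_ofPred_eq, Module.End.mem_eigenspace_iff, toLin'_apply]
  tauto

theorem lamMin_le_eigenvalues {m : ℕ} {A : Matrix (Fin m) (Fin m) ℝ} (hA : A.IsHermitian)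
    (i : Fin m) : lamMin A ≤ hA.eigenvalues i := by
  rw [lamMin, eigs_eq_range_eigenvalues hA]
  exact csInf_le (Set.finite_range _).bddBelow ⟨i, rfl⟩

theorem lamMin_mul_dotProduct_self_le {m : ℕ} {A : Matrix (Fin m) (Fin m) ℝ}
    (hA : A.IsHermitian) (x : Fin m → ℝ) : lamMin A * (x ⬝ᵥ x) ≤ x ⬝ᵥ A *ᵥ x :=
  hA.mul_dotProduct_self_le_of_le_eigenvalues (lamMin_le_eigenvalues hA) x

theorem le_lamMin_of_forall_mul_dotProduct_self_le {m : ℕ}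
    {A : Matrix (Fin (m + 1)) (Fin (m + 1)) ℝ} (hA : A.IsHermitian) {c : ℝ}
    (h : ∀ x, c * (x ⬝ᵥ x) ≤ x ⬝ᵥ A *ᵥ x) : c ≤ lamMin A := by
  refine le_csInf (by rw [eigs_eq_range_eigenvalues hA]; exact Set.range_nonempty _) ?_
  rintro b ⟨v, hv, hAv⟩
  have hvv : 0 < v ⬝ᵥ v := by simpa using dotProduct_star_self_pos_iff.2 hv
  have hcb := h v
  rw [hAv, dotProduct_smul, smul_eq_mul] at hcb
  exact le_of_mul_le_mul_right hcb hvv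

theorem lamMin_transpose_mul_self_nonneg {m p : ℕ} (B : Matrix (Fin p) (Fin (m + 1)) ℝ) :
    0 ≤ lamMin (Bᵀ * B) :=
  le_lamMin_of_forall_mul_dotProduct_self_le (isHermitian_transpose_mul_self B) fun x => by
    rw [zero_mul, dotProduct_mulVec_transpose_mul_self]
    simpa using dotProduct_star_self_nonneg (B *ᵥ x)

theorem dotProduct_self_const_add {ι : Type*} [Fintype ι] (c : ℝ) {k : ι → ℝ}
    (hk : ∑ i, k i = 0) :
    (Function.const ι c + k) ⬝ᵥ (Function.const ι c + k) =
      Fintype.card ι * c ^ 2 + k ⬝ᵥ k := by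
  simp only [dotProduct, Pi.add_apply, Function.const_apply, add_mul, mul_add,
    Finset.sum_add_distrib, ← Finset.mul_sum, ← Finset.sum_mul, hk, Finset.sum_const,
    Finset.card_univ, nsmul_eq_mul]
  ring

theorem sum_mulVec_eq_mul_dotProduct_of_mean {N n : ℕ} (H : Matrix (Fin N) (Fin n) ℝ)
    {μ : Fin n → ℝ} (hμ : ∀ j, μ j = (1 / (N : ℝ)) * ∑ i, H i j) (v : Fin n → ℝ) :
    ∑ i, (H *ᵥ v) i = N * (μ ⬝ᵥ v) := by
  have hcol : ∀ j, ∑ i, H i j = N * μ j := by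
    intro j
    rcases Nat.eq_zero_or_pos N with rfl | hN
    · simp
    · rw [hμ, ← mul_assoc, mul_one_div_cancel (by positivity), one_mul]
  simp only [mulVec, dotProduct, Finset.mul_sum]
  rw [Finset.sum_comm]
  refine Finset.sum_congr rfl fun j _ => ?_
  rw [← Finset.sum_mul, hcol, mul_assoc]

theorem hatM_mulVec_cons {N n : ℕ} (H : Matrix (Fin N) (Fin n) ℝ) (c : ℝ) (v : Fin n → ℝ) :
    hatM H *ᵥ vecCons c v = Function.const _ c + H *ᵥ v := by
  ext i
  simp [hatM, mulVec, dotProduct, Fin.sum_univ_succ, vecCons]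

theorem centerU_mulVec_cons {n : ℕ} (μ : Fin n → ℝ) (c : ℝ) (v : Fin n → ℝ) :
    centerU μ *ᵥ vecCons c v = vecCons (c - μ ⬝ᵥ v) v := by
  ext i
  refine Fin.cases ?_ (fun i' => ?_) i
  · simp [centerU, mulVec, dotProduct, Fin.sum_univ_succ, sub_eq_add_neg]
  · simp [centerU, mulVec, dotProduct, Fin.sum_univ_succ, ite_mul]

theorem hatM_mulVec_centerU_mulVec_cons {N n : ℕ} (H : Matrix (Fin N) (Fin n) ℝ)
    (μ : Fin n → ℝ) (c : ℝ) (v : Fin n → ℝ) :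
    hatM H *ᵥ (centerU μ *ᵥ vecCons c v) =
      Function.const _ c + hatM H *ᵥ (centerU μ *ᵥ vecCons 0 v) := by
  ext i
  simp only [centerU_mulVec_cons, hatM_mulVec_cons, Pi.add_apply, Function.const_apply]
  ring

theorem sum_hatM_mulVec_centerU_mulVec_cons_zero {N n : ℕ} (H : Matrix (Fin N) (Fin n) ℝ)
    {μ : Fin n → ℝ} (hμ : ∀ j, μ j = (1 / (N : ℝ)) * ∑ i, H i j) (v : Fin n → ℝ) :
    ∑ i, (hatM H *ᵥ (centerU μ *ᵥ vecCons 0 v)) i = 0 := by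
  rw [centerU_mulVec_cons, hatM_mulVec_cons]
  simp only [Pi.add_apply, Function.const_apply, Finset.sum_add_distrib,
    sum_mulVec_eq_mul_dotProduct_of_mean H hμ]
  simp

theorem dotProduct_self_hatM_mulVec_centerU_mulVec_cons {N n : ℕ}
    (H : Matrix (Fin N) (Fin n) ℝ) {μ : Fin n → ℝ}
    (hμ : ∀ j, μ j = (1 / (N : ℝ)) * ∑ i, H i j) (c : ℝ) (v : Fin n → ℝ) :
    hatM H *ᵥ (centerU μ *ᵥ vecCons c v) ⬝ᵥ hatM H *ᵥ (centerU μ *ᵥ vecCons c v) =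
      N * c ^ 2 +
        hatM H *ᵥ (centerU μ *ᵥ vecCons 0 v) ⬝ᵥ hatM H *ᵥ (centerU μ *ᵥ vecCons 0 v) := by
  rw [hatM_mulVec_centerU_mulVec_cons,
    dotProduct_self_const_add c (sum_hatM_mulVec_centerU_mulVec_cons_zero H hμ v),
    Fintype.card_fin]

theorem stmt2_general {N n : ℕ} (H : Matrix (Fin N) (Fin n) ℝ)
    (μ : Fin n → ℝ) (hμ : ∀ j, μ j = (1 / (N : ℝ)) * ∑ i, H i j) :
    lamMin ((centerU μ)ᵀ * (hatM H)ᵀ * hatM H * centerU μ) ≥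
      lamMin ((hatM H)ᵀ * hatM H) := by
  set A := hatM H
  set U := centerU μ
  set lam := lamMin (Aᵀ * A)
  have hA := isHermitian_transpose_mul_self A
  have hlam_nonneg : 0 ≤ lam := lamMin_transpose_mul_self_nonneg A
  have hlam_le_N : lam ≤ N := by
    simpa [dotProduct_mulVec_transpose_mul_self, hatM_mulVec_cons, A] using
      lamMin_mul_dotProduct_self_le hA (vecCons 1 0)
  have hgram : Uᵀ * Aᵀ * A * U = (A * U)ᵀ * (A * U) := by
    simp only [transpose_mul, Matrix.mul_assoc]
  rw [ge_iff_le, hgram]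
  refine le_lamMin_of_forall_mul_dotProduct_self_le (isHermitian_transpose_mul_self _) fun x => ?_
  obtain ⟨c, v, rfl⟩ : ∃ c v, x = vecCons c v := ⟨_, _, (cons_head_tail x).symm⟩
  have hcentered := lamMin_mul_dotProduct_self_le hA (U *ᵥ vecCons 0 v)
  have hnorm : U *ᵥ vecCons 0 v ⬝ᵥ U *ᵥ vecCons 0 v = (μ ⬝ᵥ v) ^ 2 + v ⬝ᵥ v := by
    rw [centerU_mulVec_cons, cons_dotProduct_cons]
    ring
  rw [dotProduct_mulVec_transpose_mul_self, hnorm] at hcentered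
  rw [dotProduct_mulVec_transpose_mul_self, ← mulVec_mulVec,
    dotProduct_self_hatM_mulVec_centerU_mulVec_cons H hμ, cons_dotProduct_cons]
  nlinarith [mul_le_mul_of_nonneg_right hlam_le_N (sq_nonneg c),
    mul_nonneg hlam_nonneg (sq_nonneg (μ ⬝ᵥ v))]

theorem stmt2 {N n : ℕ} (H : Matrix (Fin N) (Fin n) ℝ)
    (μ : Fin n → ℝ) (hμ : ∀ j, μ j = (1 / (N : ℝ)) * ∑ i, H i j)
    (hrank : (hatM H).rank = n + 1) :
    lamMin ((centerU μ)ᵀ * (hatM H)ᵀ * hatM H * centerU μ) ≥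
      lamMin ((hatM H)ᵀ * hatM H) :=
  stmt2_general H μ hμ
end
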